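/- Let g be holomorphic on the unit disc. For every m ∈ ℕ and every holomorphic f on the disc with f(0) = 0, (S_g − T_g)^m f = Σ_{j=0}^m (−1)^{m−j} (m!/j!) S_g^j T_g^{m−j} f. -/

import Mathlib

open MeasureTheory Metric

/-- The analytic paraproduct `T_g f (z) = ∫₀^z f(ζ) g'(ζ) dζ`, realized by
integrating along the segment from `0` to `z`. -/
noncomputable def Tg (g f : ℂ → ℂ) : ℂ → ℂ :=
  fun z => z * ∫ t in (0:ℝ)..1, f ((t : ℂ) * z) * deriv g ((t : ℂ) * z)

/-- The analytic paraproduct `S_g f (z) = ∫₀^z f'(ζ) g(ζ) dζ`, realized by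
integrating along the segment from `0` to `z`. -/
noncomputable def Sg (g f : ℂ → ℂ) : ℂ → ℂ :=
  fun z => z * ∫ t in (0:ℝ)..1, deriv f ((t : ℂ) * z) * g ((t : ℂ) * z)

/-- The multiplication operator `M_g f = g f`. -/
def Mg (g f : ℂ → ℂ) : ℂ → ℂ := fun z => g z * f z

/-!
On the disc, `T_g f` and `S_g f` are the primitives vanishing at `0` of `f g'` and `f' g`. Hence
`S_g f + T_g f = g f` when `f 0 = 0`, and comparing derivatives gives `T_g S_g = S_g T_g - T_g²` on
such `f`. On the space of holomorphic functions on the disc vanishing at `0`, taken modulo agreement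
on the disc, `S_g` and `T_g` are linear operators, so the claim is an identity in a ring with
`T S = S T - T²`: there `T^k S = S T^k - k T^(k+1)`, and multiplying the expansion of `(S - T)^m`
by `S - T` on the right reproduces it for `m + 1`, because `c j k = (-1)^k (j+k)!/j!` satisfies
`c j k = c (j-1) k - k c j (k-1)`.
-/

section NormalOrdering

open Finset
open scoped Nat

variable {A : Type*} [Ring A] {S T : A}

theorem pow_mul_eq_of_mul_eq_sub (h : T * S = S * T - T * T) (k : ℕ) :
    T ^ k * S = S * T ^ k - k • T ^ (k + 1) := by
  induction k with
  | zero => simp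
  | succ k ih =>
    rw [pow_succ', mul_assoc, ih, mul_sub, ← mul_assoc, h, mul_smul_comm, sub_mul, succ_nsmul]
    simp only [mul_assoc, ← pow_succ']
    abel

def normalOrderCoeff (𝕜 : Type*) [Field 𝕜] (j k : ℕ) : 𝕜 := (-1) ^ k * ((j + k)! / j !)

variable {𝕜 : Type*} [Field 𝕜]

theorem normalOrderCoeff_zero_succ (k : ℕ) :
    normalOrderCoeff 𝕜 0 (k + 1) = -(normalOrderCoeff 𝕜 0 k * (k + 1 : ℕ)) := by
  simp only [normalOrderCoeff, zero_add, Nat.factorial_succ k]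
  push_cast
  ring

theorem normalOrderCoeff_succ_zero [CharZero 𝕜] (j : ℕ) :
    normalOrderCoeff 𝕜 (j + 1) 0 = normalOrderCoeff 𝕜 j 0 := by
  simp [normalOrderCoeff, div_self, Nat.factorial_ne_zero]

theorem normalOrderCoeff_succ_succ [CharZero 𝕜] (j k : ℕ) :
    normalOrderCoeff 𝕜 (j + 1) (k + 1)
      = normalOrderCoeff 𝕜 j (k + 1) - normalOrderCoeff 𝕜 (j + 1) k * (k + 1 : ℕ) := by
  simp only [normalOrderCoeff]
  rw [show j + 1 + (k + 1) = j + k + 1 + 1 by omega, show j + (k + 1) = j + k + 1 by omega,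
    show j + 1 + k = j + k + 1 by omega, Nat.factorial_succ (j + k + 1), Nat.factorial_succ j]
  have := Nat.cast_ne_zero (R := 𝕜) |>.2 (Nat.factorial_ne_zero j)
  push_cast
  field_simp
  ring

variable [CharZero 𝕜] [Algebra 𝕜 A]

theorem sub_pow_eq_sum_antidiagonal (h : T * S = S * T - T * T) (m : ℕ) :
    (S - T) ^ m = ∑ p ∈ antidiagonal m, normalOrderCoeff 𝕜 p.1 p.2 • (S ^ p.1 * T ^ p.2) := by
  induction m with
  | zero => simp [normalOrderCoeff]
  | succ m ih =>
    have hstep : ∀ j k : ℕ, S ^ j * T ^ k * (S - T)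
        = S ^ (j + 1) * T ^ k - ((k + 1 : ℕ) : 𝕜) • (S ^ j * T ^ (k + 1)) := by
      intro j k
      rw [Nat.cast_smul_eq_nsmul, mul_sub, mul_assoc, pow_mul_eq_of_mul_eq_sub h, mul_sub,
        ← mul_assoc, ← pow_succ, mul_smul_comm, succ_nsmul, mul_assoc, ← pow_succ]
      abel
    have hS : ∑ p ∈ antidiagonal m, normalOrderCoeff 𝕜 p.1 p.2 • (S ^ (p.1 + 1) * T ^ p.2)
        = ∑ p ∈ antidiagonal (m + 1),
            (if p.1 = 0 then 0 else normalOrderCoeff 𝕜 (p.1 - 1) p.2) • (S ^ p.1 * T ^ p.2) := by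
      simp [Nat.sum_antidiagonal_succ]
    have hT : ∑ p ∈ antidiagonal m,
          (normalOrderCoeff 𝕜 p.1 p.2 * (p.2 + 1 : ℕ)) • (S ^ p.1 * T ^ (p.2 + 1))
        = ∑ p ∈ antidiagonal (m + 1),
            (if p.2 = 0 then 0 else normalOrderCoeff 𝕜 p.1 (p.2 - 1) * p.2) • (S ^ p.1 * T ^ p.2) := by
      simp [Nat.sum_antidiagonal_succ']
    rw [pow_succ, ih, sum_mul]
    simp only [smul_mul_assoc, hstep, smul_sub, sum_sub_distrib, smul_smul]
    rw [hS, hT, ← sum_sub_distrib]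
    refine sum_congr rfl fun p hp => ?_
    rw [← sub_smul]
    congr 1
    -- the two `if`s are the recurrence's terms `c (j-1) k` and `k c j (k-1)`, zero on the axes
    rcases p with ⟨_ | j, _ | k⟩
    · simp at hp
    · simp [normalOrderCoeff_zero_succ]
    · simp [normalOrderCoeff_succ_zero]
    · simp [normalOrderCoeff_succ_succ]

theorem sub_pow_eq_sum_range (h : T * S = S * T - T * T) (m : ℕ) :
    (S - T) ^ m = ∑ j ∈ range (m + 1),
      ((-1) ^ (m - j) * ((m ! : 𝕜) / j !)) • (S ^ j * T ^ (m - j)) := by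
  rw [sub_pow_eq_sum_antidiagonal (𝕜 := 𝕜) h, Nat.sum_antidiagonal_eq_sum_range_succ_mk]
  refine sum_congr rfl fun j hj => ?_
  rw [normalOrderCoeff, Nat.add_sub_cancel' (Nat.lt_succ_iff.1 (mem_range.1 hj))]

end NormalOrdering

open Set

noncomputable def radialPrimitive (h : ℂ → ℂ) (z : ℂ) : ℂ := z * ∫ t in (0:ℝ)..1, h (t * z)

section RadialPrimitive

variable {r : ℝ} {h F G : ℂ → ℂ} {z : ℂ}

theorem ofReal_mul_mem_ball {t : ℝ} (ht : t ∈ Icc (0 : ℝ) 1) (hz : z ∈ ball (0 : ℂ) r) :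
    (t : ℂ) * z ∈ ball (0 : ℂ) r := by
  rw [mem_ball_zero_iff, norm_mul, Complex.norm_real, Real.norm_of_nonneg ht.1] at *
  exact (mul_le_of_le_one_left (norm_nonneg z) ht.2).trans_lt hz

theorem radialPrimitive_eq_sub (hh : ContinuousOn h (ball 0 r))
    (hF : ∀ w ∈ ball (0 : ℂ) r, HasDerivAt F (h w) w) (hz : z ∈ ball (0 : ℂ) r) :
    radialPrimitive h z = F z - F 0 := by
  have hderiv : ∀ t ∈ uIcc (0 : ℝ) 1,
      HasDerivAt (fun s : ℝ => F (s * z)) (h (t * z) * z) t := by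
    intro t ht
    rw [uIcc_of_le zero_le_one] at ht
    have := (hF _ (ofReal_mul_mem_ball ht hz)).comp (t : ℂ) ((hasDerivAt_id _).mul_const z)
    simpa using this.comp_ofReal
  have hcont : ContinuousOn (fun t : ℝ => h (t * z) * z) (uIcc 0 1) := by
    rw [uIcc_of_le zero_le_one]
    exact (hh.comp (by fun_prop) fun t ht => ofReal_mul_mem_ball ht hz).mul continuousOn_const
  rw [radialPrimitive, mul_comm, ← intervalIntegral.integral_mul_const,
    intervalIntegral.integral_eq_sub_of_hasDerivAt hderiv hcont.intervalIntegrable]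
  simp

theorem hasDerivAt_radialPrimitive (hh : DifferentiableOn ℂ h (ball 0 r)) (hz : z ∈ ball (0 : ℂ) r) :
    HasDerivAt (radialPrimitive h) (h z) z := by
  obtain ⟨F, hF⟩ := hh.isExactOn_ball
  have : radialPrimitive h =ᶠ[nhds z] fun w => F w - F 0 :=
    Filter.eventually_of_mem (isOpen_ball.mem_nhds hz) fun w hw =>
      radialPrimitive_eq_sub hh.continuousOn hF hw
  exact ((hF z hz).sub_const _).congr_of_eventuallyEq this

theorem eqOn_ball_of_hasDerivAt (hh : ContinuousOn h (ball 0 r))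
    (hF : ∀ w ∈ ball (0 : ℂ) r, HasDerivAt F (h w) w)
    (hG : ∀ w ∈ ball (0 : ℂ) r, HasDerivAt G (h w) w) (h0 : F 0 = G 0) :
    EqOn F G (ball 0 r) := fun z hz => by
  have := (radialPrimitive_eq_sub hh hF hz).symm.trans (radialPrimitive_eq_sub hh hG hz)
  rwa [h0, sub_left_inj] at this

end RadialPrimitive

section Paraproducts

variable {r : ℝ} {g f u v w : ℂ → ℂ} {z : ℂ}

theorem Tg_eq_radialPrimitive : Tg g f = radialPrimitive fun w => f w * deriv g w := rfl

theorem Sg_eq_radialPrimitive : Sg g f = radialPrimitive fun w => deriv f w * g w := rfl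

theorem Tg_apply_zero : Tg g f 0 = 0 := by simp [Tg]

theorem Sg_apply_zero : Sg g f 0 = 0 := by simp [Sg]

theorem hasDerivAt_Tg (hg : DifferentiableOn ℂ g (ball 0 r))
    (hf : DifferentiableOn ℂ f (ball 0 r)) (hz : z ∈ ball (0 : ℂ) r) :
    HasDerivAt (Tg g f) (f z * deriv g z) z := by
  rw [Tg_eq_radialPrimitive]
  exact hasDerivAt_radialPrimitive (hf.mul (hg.deriv isOpen_ball)) hz

theorem hasDerivAt_Sg (hg : DifferentiableOn ℂ g (ball 0 r))
    (hf : DifferentiableOn ℂ f (ball 0 r)) (hz : z ∈ ball (0 : ℂ) r) :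
    HasDerivAt (Sg g f) (deriv f z * g z) z := by
  rw [Sg_eq_radialPrimitive]
  exact hasDerivAt_radialPrimitive ((hf.deriv isOpen_ball).mul hg) hz

theorem differentiableOn_Tg (hg : DifferentiableOn ℂ g (ball 0 r))
    (hf : DifferentiableOn ℂ f (ball 0 r)) :
    DifferentiableOn ℂ (Tg g f) (ball 0 r) := fun _ hz =>
  (hasDerivAt_Tg hg hf hz).differentiableAt.differentiableWithinAt

theorem differentiableOn_Sg (hg : DifferentiableOn ℂ g (ball 0 r))
    (hf : DifferentiableOn ℂ f (ball 0 r)) :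
    DifferentiableOn ℂ (Sg g f) (ball 0 r) := fun _ hz =>
  (hasDerivAt_Sg hg hf hz).differentiableAt.differentiableWithinAt

theorem Sg_add_Tg_eqOn_Mg (hg : DifferentiableOn ℂ g (ball 0 r))
    (hf : DifferentiableOn ℂ f (ball 0 r)) (hf0 : f 0 = 0) :
    EqOn (Sg g f + Tg g f) (Mg g f) (ball 0 r) := by
  refine eqOn_ball_of_hasDerivAt (h := fun w => deriv f w * g w + f w * deriv g w)
    (((hf.deriv isOpen_ball).mul hg).add (hf.mul (hg.deriv isOpen_ball))).continuousOn
    (fun w hw => (hasDerivAt_Sg hg hf hw).add (hasDerivAt_Tg hg hf hw)) (fun w hw => ?_) ?_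
  · have hgw := (hg.differentiableAt (isOpen_ball.mem_nhds hw)).hasDerivAt
    have hfw := (hf.differentiableAt (isOpen_ball.mem_nhds hw)).hasDerivAt
    exact (hgw.mul hfw).congr_deriv (by ring)
  · simp [Sg_apply_zero, Tg_apply_zero, Mg, hf0]

theorem Tg_Sg_eqOn (hg : DifferentiableOn ℂ g (ball 0 r))
    (hf : DifferentiableOn ℂ f (ball 0 r)) (hf0 : f 0 = 0) :
    EqOn (Tg g (Sg g f)) (Sg g (Tg g f) - Tg g (Tg g f)) (ball 0 r) := by
  have hTf := differentiableOn_Tg hg hf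
  refine eqOn_ball_of_hasDerivAt (h := fun w => Sg g f w * deriv g w)
    ((differentiableOn_Sg hg hf).mul (hg.deriv isOpen_ball)).continuousOn
    (fun w hw => hasDerivAt_Tg hg (differentiableOn_Sg hg hf) hw) (fun w hw => ?_) ?_
  · refine ((hasDerivAt_Sg hg hTf hw).sub (hasDerivAt_Tg hg hTf hw)).congr_deriv ?_
    have hST : Sg g f w + Tg g f w = g w * f w := Sg_add_Tg_eqOn_Mg hg hf hf0 hw
    rw [(hasDerivAt_Tg hg hf hw).deriv]
    linear_combination -(deriv g w) * hST
  · simp [Sg_apply_zero, Tg_apply_zero]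

theorem Tg_eqOn_add_smul (hg : DifferentiableOn ℂ g (ball 0 r))
    (hv : DifferentiableOn ℂ v (ball 0 r))
    (hw : DifferentiableOn ℂ w (ball 0 r)) (c : ℂ) (huvw : EqOn u (v + c • w) (ball 0 r)) :
    EqOn (Tg g u) (Tg g v + c • Tg g w) (ball 0 r) := by
  have hu : DifferentiableOn ℂ u (ball 0 r) := (hv.add (hw.const_smul c)).congr huvw
  refine eqOn_ball_of_hasDerivAt (h := fun z => u z * deriv g z)
    (hu.mul (hg.deriv isOpen_ball)).continuousOn (fun z hz => hasDerivAt_Tg hg hu hz)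
    (fun z hz => ?_) ?_
  · refine ((hasDerivAt_Tg hg hv hz).add ((hasDerivAt_Tg hg hw hz).const_smul c)).congr_deriv ?_
    rw [huvw hz, Pi.add_apply, Pi.smul_apply, smul_eq_mul, smul_eq_mul]
    ring
  · simp [Tg_apply_zero]

theorem Sg_eqOn_add_smul (hg : DifferentiableOn ℂ g (ball 0 r))
    (hv : DifferentiableOn ℂ v (ball 0 r))
    (hw : DifferentiableOn ℂ w (ball 0 r)) (c : ℂ) (huvw : EqOn u (v + c • w) (ball 0 r)) :
    EqOn (Sg g u) (Sg g v + c • Sg g w) (ball 0 r) := by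
  have hu : DifferentiableOn ℂ u (ball 0 r) := (hv.add (hw.const_smul c)).congr huvw
  refine eqOn_ball_of_hasDerivAt (h := fun z => deriv u z * g z)
    ((hu.deriv isOpen_ball).mul hg).continuousOn (fun z hz => hasDerivAt_Sg hg hu hz)
    (fun z hz => ?_) ?_
  · have hvz := (hv.differentiableAt (isOpen_ball.mem_nhds hz)).hasDerivAt
    have hwz := (hw.differentiableAt (isOpen_ball.mem_nhds hz)).hasDerivAt
    have hderiv : deriv u z = deriv v z + c * deriv w z :=
      ((hvz.add (hwz.const_smul c)).congr_of_eventuallyEq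
        (huvw.eventuallyEq_of_mem (isOpen_ball.mem_nhds hz))).deriv
    refine ((hasDerivAt_Sg hg hv hz).add ((hasDerivAt_Sg hg hw hz).const_smul c)).congr_deriv ?_
    rw [hderiv, smul_eq_mul]
    ring
  · simp [Sg_apply_zero]

end Paraproducts

def vanishingHolomorphic (r : ℝ) : Submodule ℂ (ℂ → ℂ) where
  carrier := {f | DifferentiableOn ℂ f (ball 0 r) ∧ f 0 = 0}
  add_mem' hf hg := ⟨hf.1.add hg.1, by simp [hf.2, hg.2]⟩
  zero_mem' := ⟨differentiableOn_const 0, rfl⟩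
  smul_mem' c _ hf := ⟨hf.1.const_smul c, by simp [hf.2]⟩

def eqZeroOnBall (r : ℝ) : Submodule ℂ (vanishingHolomorphic r) where
  carrier := {f | EqOn (f : ℂ → ℂ) 0 (ball 0 r)}
  add_mem' hf hg z hz := by simp [hf hz, hg hz]
  zero_mem' _ _ := rfl
  smul_mem' c _ hf z hz := by simp [hf hz]

/-- Holomorphic functions on `ball 0 r` vanishing at `0`, representatives that agree on the ball
being identified: `Sg g` and `Tg g` are linear on this quotient, not on functions on all of `ℂ`. -/
abbrev Hol₀ (r : ℝ) := vanishingHolomorphic r ⧸ eqZeroOnBall r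

namespace Hol₀

variable {r : ℝ}

theorem mk_eq_mk_iff {u v : vanishingHolomorphic r} :
    (Submodule.Quotient.mk u : Hol₀ r) = Submodule.Quotient.mk v ↔ EqOn (u : ℂ → ℂ) v (ball 0 r) := by
  rw [Submodule.Quotient.eq]
  exact forall₂_congr fun z _ => sub_eq_zero

def descend (P : (ℂ → ℂ) → ℂ → ℂ) (hP : MapsTo P (vanishingHolomorphic r) (vanishingHolomorphic r))
    (hlin : ∀ (u v w : vanishingHolomorphic r) (c : ℂ),
      EqOn (u : ℂ → ℂ) (v + c • (w : ℂ → ℂ)) (ball 0 r) →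
        EqOn (P u) (P v + c • P w) (ball 0 r)) :
    Module.End ℂ (Hol₀ r) :=
  -- `hlin` says both that `P` respects agreement on the ball and that it is linear up to it
  have hP0 : EqOn (P 0) 0 (ball 0 r) := fun z hz => by
    simpa using hlin 0 0 0 1 (fun _ _ => by simp) hz
  (eqZeroOnBall r).liftQ
    { toFun := fun u => Submodule.Quotient.mk ⟨P u, hP u.2⟩
      map_add' := fun u v => by
        rw [← Submodule.Quotient.mk_add, mk_eq_mk_iff]
        simpa using hlin (u + v) u v 1 (fun _ _ => by simp)
      map_smul' := fun c u => by
        rw [RingHom.id_apply, ← Submodule.Quotient.mk_smul, mk_eq_mk_iff]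
        intro z hz
        simpa [hP0 hz] using hlin (c • u) 0 u c (fun _ _ => by simp) hz }
    fun u hu => by
      rw [LinearMap.mem_ker, LinearMap.coe_mk, AddHom.coe_mk, Submodule.Quotient.mk_eq_zero]
      intro z hz
      simpa [hP0 hz] using hlin u 0 0 1 (fun z hz => by simpa using hu hz) hz

theorem sum_mk {ι : Type*} (s : Finset ι) (x : ι → vanishingHolomorphic r) :
    ∑ i ∈ s, (Submodule.Quotient.mk (x i) : Hol₀ r) = Submodule.Quotient.mk (∑ i ∈ s, x i) :=
  (map_sum (eqZeroOnBall r).mkQ x s).symm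

theorem descend_mk {P : (ℂ → ℂ) → ℂ → ℂ} {hP hlin} (u : vanishingHolomorphic r) :
    descend P hP hlin (Submodule.Quotient.mk u) = Submodule.Quotient.mk ⟨P u, hP u.2⟩ :=
  rfl

theorem pow_apply_mk {φ : Module.End ℂ (Hol₀ r)} {P : (ℂ → ℂ) → ℂ → ℂ}
    (hP : MapsTo P (vanishingHolomorphic r) (vanishingHolomorphic r))
    (hφ : ∀ u : vanishingHolomorphic r,
      φ (Submodule.Quotient.mk u) = Submodule.Quotient.mk ⟨P u, hP u.2⟩)
    (n : ℕ) (u : vanishingHolomorphic r) :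
    (φ ^ n) (Submodule.Quotient.mk u) = Submodule.Quotient.mk ⟨P^[n] u, hP.iterate n u.2⟩ := by
  induction n with
  | zero => rfl
  | succ n ih =>
    rw [pow_succ', Module.End.mul_apply, ih, hφ]
    simp only [Function.iterate_succ_apply']

end Hol₀

section ParaproductOperators

variable {r : ℝ} {g : ℂ → ℂ}

open Hol₀

theorem mapsTo_Tg (hg : DifferentiableOn ℂ g (ball 0 r)) :
    MapsTo (Tg g) (vanishingHolomorphic r) (vanishingHolomorphic r) :=
  fun _ hf => ⟨differentiableOn_Tg hg hf.1, Tg_apply_zero⟩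

theorem mapsTo_Sg (hg : DifferentiableOn ℂ g (ball 0 r)) :
    MapsTo (Sg g) (vanishingHolomorphic r) (vanishingHolomorphic r) :=
  fun _ hf => ⟨differentiableOn_Sg hg hf.1, Sg_apply_zero⟩

theorem mapsTo_Sg_sub_Tg (hg : DifferentiableOn ℂ g (ball 0 r)) :
    MapsTo (fun h => Sg g h - Tg g h) (vanishingHolomorphic r) (vanishingHolomorphic r) :=
  fun _ hf => sub_mem (mapsTo_Sg hg hf) (mapsTo_Tg hg hf)

noncomputable def Tg₀ (hg : DifferentiableOn ℂ g (ball 0 r)) : Module.End ℂ (Hol₀ r) :=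
  descend (Tg g) (mapsTo_Tg hg) fun _ v w c => Tg_eqOn_add_smul hg v.2.1 w.2.1 c

noncomputable def Sg₀ (hg : DifferentiableOn ℂ g (ball 0 r)) : Module.End ℂ (Hol₀ r) :=
  descend (Sg g) (mapsTo_Sg hg) fun _ v w c => Sg_eqOn_add_smul hg v.2.1 w.2.1 c

theorem Tg₀_mul_Sg₀ (hg : DifferentiableOn ℂ g (ball 0 r)) :
    Tg₀ hg * Sg₀ hg = Sg₀ hg * Tg₀ hg - Tg₀ hg * Tg₀ hg := by
  refine Submodule.linearMap_qext _ (LinearMap.ext fun u => ?_)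
  simp only [LinearMap.comp_apply, Submodule.mkQ_apply, Module.End.mul_apply,
    LinearMap.sub_apply, Tg₀, Sg₀, descend_mk, ← Submodule.Quotient.mk_sub, mk_eq_mk_iff]
  exact Tg_Sg_eqOn hg u.2.1 u.2.2

theorem Sg₀_sub_Tg₀_pow_apply_mk (hg : DifferentiableOn ℂ g (ball 0 r)) (m : ℕ)
    (u : vanishingHolomorphic r) :
    ((Sg₀ hg - Tg₀ hg) ^ m) (Submodule.Quotient.mk u)
      = Submodule.Quotient.mk ⟨(fun h => Sg g h - Tg g h)^[m] u,
          (mapsTo_Sg_sub_Tg hg).iterate m u.2⟩ :=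
  pow_apply_mk (mapsTo_Sg_sub_Tg hg) (fun _ => rfl) m u

theorem Sg₀_pow_mul_Tg₀_pow_apply_mk (hg : DifferentiableOn ℂ g (ball 0 r)) (j k : ℕ)
    (u : vanishingHolomorphic r) :
    (Sg₀ hg ^ j * Tg₀ hg ^ k) (Submodule.Quotient.mk u)
      = Submodule.Quotient.mk ⟨(Sg g)^[j] ((Tg g)^[k] u),
          (mapsTo_Sg hg).iterate j ((mapsTo_Tg hg).iterate k u.2)⟩ := by
  rw [Module.End.mul_apply, pow_apply_mk (mapsTo_Tg hg) (fun _ => rfl),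
    pow_apply_mk (mapsTo_Sg hg) (fun _ => rfl)]

end ParaproductOperators

theorem stmt_6_general (g f : ℂ → ℂ) (hg : DifferentiableOn ℂ g (Metric.ball 0 1))
    (hf : DifferentiableOn ℂ f (Metric.ball 0 1)) (hf0 : f 0 = 0) (m : ℕ) :
    ∀ z ∈ Metric.ball (0:ℂ) 1,
      (fun h => Sg g h - Tg g h)^[m] f z
        = ∑ j ∈ Finset.range (m + 1),
            (-1 : ℂ) ^ (m - j) * ((Nat.factorial m : ℂ) / (Nat.factorial j : ℂ))
              * (Sg g)^[j] ((Tg g)^[m - j] f) z := by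
  intro z hz
  have key := congrArg (· (Submodule.Quotient.mk ⟨f, hf, hf0⟩ : Hol₀ 1))
    (sub_pow_eq_sum_range (𝕜 := ℂ) (Tg₀_mul_Sg₀ hg) m)
  simp only [Sg₀_sub_Tg₀_pow_apply_mk, LinearMap.sum_apply, LinearMap.smul_apply,
    Sg₀_pow_mul_Tg₀_pow_apply_mk, ← Submodule.Quotient.mk_smul, Hol₀.sum_mk, Hol₀.mk_eq_mk_iff] at key
  simpa using key hz

/-- For `f` holomorphic with `f 0 = 0`,
`(S_g − T_g)^m f = ∑_{j=0}^m (−1)^{m−j} (m!/j!) S_g^j T_g^{m−j} f`. -/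
theorem stmt_6 (g f : ℂ → ℂ) (hg : DifferentiableOn ℂ g (Metric.ball 0 1))
    (hf : DifferentiableOn ℂ f (Metric.ball 0 1)) (hf0 : f 0 = 0) (m : ℕ) (hm : 1 ≤ m) :
    ∀ z ∈ Metric.ball (0:ℂ) 1,
      (fun h => Sg g h - Tg g h)^[m] f z
        = ∑ j ∈ Finset.range (m + 1),
            (-1 : ℂ) ^ (m - j) * ((Nat.factorial m : ℂ) / (Nat.factorial j : ℂ))
              * (Sg g)^[j] ((Tg g)^[m - j] f) z :=
  stmt_6_general g f hg hf hf0 m
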